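/- Let λ be a regular cardinal with λ^{<λ} = λ. Then there exists a special λ⁺-Aronszajn tree: a tree of height λ⁺, with levels of size ≤ λ, with no branch of length λ⁺, that is a union of λ antichains. -/

import Mathlib

noncomputable section
namespace Specker14

open Cardinal Set Ordinal

universe u

section wrappers
variable {α : Type u} [LinearOrder α] [WellFoundedLT α]

/-- order type of a linear well-order -/
def oty (α : Type u) [LinearOrder α] [WellFoundedLT α] : Ordinal.{u} :=
  @Ordinal.type α (· < ·) isWellOrder_lt

/-- typein wrapper -/
def tp (x : α) : Ordinal.{u} := @Ordinal.typein α (· < ·) isWellOrder_lt x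

/-- enum wrapper -/
def en (o : Ordinal.{u}) (h : o < oty α) : α :=
  @Ordinal.enum α (· < ·) isWellOrder_lt ⟨o, h⟩

lemma tp_lt_oty (x : α) : tp x < oty α := @typein_lt_type α (· < ·) isWellOrder_lt x

@[simp] lemma tp_lt_tp {x y : α} : tp x < tp y ↔ x < y :=
  @typein_lt_typein α (· < ·) isWellOrder_lt x y

@[simp] lemma tp_le_tp {x y : α} : tp x ≤ tp y ↔ x ≤ y := by
  rw [← not_lt, ← @not_lt _ _ y x, tp_lt_tp]

lemma tp_inj {x y : α} : tp x = tp y ↔ x = y :=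
  @typein_inj α (· < ·) isWellOrder_lt x y

@[simp] lemma tp_en (o : Ordinal.{u}) (h : o < oty α) : tp (en o h : α) = o :=
  @typein_enum α (· < ·) isWellOrder_lt o h

@[simp] lemma en_tp (x : α) : en (tp x) (tp_lt_oty x) = x :=
  @enum_typein α (· < ·) isWellOrder_lt x

lemma lt_en_iff {x : α} {o : Ordinal.{u}} (h : o < oty α) : x < en o h ↔ tp x < o := by
  constructor
  · intro hx
    have := tp_lt_tp.mpr hx
    rwa [tp_en] at this
  · intro hx
    have : tp x < tp (en o h) := by rwa [tp_en]
    exact tp_lt_tp.mp this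

lemma en_lt_iff {x : α} {o : Ordinal.{u}} (h : o < oty α) : en o h < x ↔ o < tp x := by
  constructor
  · intro hx
    have := tp_lt_tp.mpr hx
    rwa [tp_en] at this
  · intro hx
    have : tp (en o h) < tp x := by rwa [tp_en]
    exact tp_lt_tp.mp this

lemma card_mk_Iio (x : α) : #{y : α // y < x} = (tp x).card :=
  @card_typein α (· < ·) isWellOrder_lt x

lemma tp_surj {o : Ordinal.{u}} (h : o < oty α) : ∃ x : α, tp x = o :=
  ⟨en o h, tp_en o h⟩

lemma oty_card : (oty α).card = #α := by
  rw [oty, Ordinal.card_type]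

end wrappers

lemma oty_toType (o : Ordinal.{u}) : oty o.ToType = o := type_toType o


variable (lam : Cardinal.{0})

/-- Value type: a well-order of order type `lam.ord`. -/
abbrev VV : Type := lam.ord.ToType
/-- Position type: a well-order of order type `(succ lam).ord`. -/
abbrev KK : Type := (Order.succ lam).ord.ToType

variable {lam}

lemma mk_VV : #(VV lam) = lam := by rw [mk_toType, card_ord]
lemma mk_KK : #(KK lam) = Order.succ lam := by rw [mk_toType, card_ord]

lemma oty_VV : oty (VV lam) = lam.ord := oty_toType _
lemma oty_KK : oty (KK lam) = (Order.succ lam).ord := oty_toType _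

lemma card_tp_lt (x : VV lam) : (tp x).card < lam := by
  have := tp_lt_oty x
  rw [oty_VV] at this
  exact lt_ord.mp this

lemma card_tpK_le (x : KK lam) : (tp x).card ≤ lam := by
  have := tp_lt_oty x
  rw [oty_KK] at this
  exact Order.lt_succ_iff.mp (lt_ord.mp this)

lemma mk_Iio_VV (x : VV lam) : #{y : VV lam | y < x} < lam := by
  have : #{y : VV lam | y < x} = (tp x).card := card_mk_Iio x
  rw [this]; exact card_tp_lt x

lemma mk_Iio_KK (x : KK lam) : #{y : KK lam | y < x} ≤ lam := by
  have : #{y : KK lam | y < x} = (tp x).card := card_mk_Iio x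
  rw [this]; exact card_tpK_le x

section hyps
variable (hinf : ℵ₀ ≤ lam)
include hinf

lemma lam_pos : (0 : Cardinal) < lam := lt_of_lt_of_le aleph0_pos hinf

lemma nonempty_VV : Nonempty (VV lam) := by
  rw [← mk_ne_zero_iff, mk_VV]; exact ne_of_gt (lam_pos hinf)

lemma small_add {a b : Cardinal} (ha : a < lam) (hb : b < lam) : a + b < lam :=
  Cardinal.add_lt_of_lt hinf ha hb

lemma small_insert {X : Type} (A : Set X) (x : X) (hA : #A < lam) :
    #(insert x A : Set X) < lam := by
  refine lt_of_le_of_lt (le_trans (mk_le_mk_of_subset ?_) (mk_union_le {x} A)) ?_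
  · intro y hy; exact hy
  · rw [mk_singleton]
    exact small_add hinf (lt_of_lt_of_le one_lt_aleph0 hinf) hA

omit hinf in
lemma lam_lt_succ : lam < Order.succ lam := Order.lt_succ lam

lemma add_one_lt_succ : lam + 1 < Order.succ lam := by
  rw [Cardinal.add_one_eq hinf]; exact Order.lt_succ lam

/-- KK has no maximal element. -/
lemma KK_no_max (x : KK lam) : ∃ y : KK lam, x < y := by
  by_contra h
  push_neg at h
  have hsub : (univ : Set (KK lam)) ⊆ (Iic x) := fun y _ => h y
  have h1 : #(KK lam) ≤ lam + 1 := by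
    calc #(KK lam) = #(univ : Set (KK lam)) := mk_univ.symm
    _ ≤ #(Iic x : Set (KK lam)) := mk_le_mk_of_subset hsub
    _ ≤ #(Iio x : Set (KK lam)) + #({x} : Set (KK lam)) := by
        rw [← Iio_union_right]; exact mk_union_le _ _
    _ ≤ lam + 1 := by
        gcongr
        · exact mk_Iio_KK x
        · rw [mk_singleton]
  rw [mk_KK] at h1
  exact absurd h1 (not_le.mpr (add_one_lt_succ hinf))

lemma nonempty_KK : Nonempty (KK lam) := by
  rw [← mk_ne_zero_iff, mk_KK]
  exact ne_of_gt (lt_of_lt_of_le (lam_pos hinf) (le_of_lt (Order.lt_succ lam)))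

lemma mk_Iic_KK (x : KK lam) : #{ξ : KK lam | ξ ≤ x} ≤ lam := by
  have h1 : {ξ : KK lam | ξ ≤ x} = insert x {ξ : KK lam | ξ < x} := by
    ext ξ; simp [le_iff_lt_or_eq, or_comm]
  rw [h1]
  calc #(insert x {ξ : KK lam | ξ < x} : Set (KK lam))
      ≤ #({x} : Set (KK lam)) + #{ξ : KK lam | ξ < x} := by
        refine le_trans (mk_le_mk_of_subset ?_) (mk_union_le _ _)
        intro y hy
        rcases hy with rfl | hy
        · exact Or.inl rfl
        · exact Or.inr hy
    _ ≤ 1 + lam := by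
        gcongr
        · rw [mk_singleton]
        · exact mk_Iio_KK x
    _ = lam := by rw [add_comm, Cardinal.add_one_eq hinf]


end hyps

section reg
variable (hreg : lam.IsRegular)
include hreg

/-- union of `< lam` many sets each of size `< lam` is small. -/
lemma small_iUnion {X : Type} {ι : Type} (A : ι → Set X)
    (hι : #ι < lam) (hA : ∀ i, #(A i) < lam) : #(⋃ i, A i) < lam :=
  lt_of_le_of_lt mk_iUnion_le_sum_mk (sum_lt_of_isRegular hreg hι hA)

/-- a small subset of `VV` is strictly bounded. -/
lemma VV_bounded (S : Set (VV lam)) (hS : #S < lam) : ∃ b : VV lam, ∀ v ∈ S, v < b := by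
  have h1 : (⨆ v : S, Order.succ (tp v.1)) < lam.ord := by
    apply iSup_lt_ord_of_isRegular hreg hS
    intro v
    have := tp_lt_oty v.1
    rw [oty_VV] at this
    exact (isSuccLimit_ord hreg.aleph0_le).succ_lt this
  have h2 : (⨆ v : S, Order.succ (tp v.1)) < oty (VV lam) := by rwa [oty_VV]
  refine ⟨en _ h2, fun v hv => ?_⟩
  rw [lt_en_iff]
  exact lt_of_lt_of_le (Order.lt_succ (tp v)) (le_ciSup (Ordinal.bddAbove_range _) (⟨v, hv⟩ : S))

end reg

section count
variable (hinf : ℵ₀ ≤ lam) (hreg : lam.IsRegular) (hpow : lam ^< lam = lam)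
include hinf hreg hpow

lemma mk_small_subsets_VV : #{S : Set (VV lam) // #S < lam} ≤ lam := by
  classical
  -- bound function
  have hb : ∀ S : {S : Set (VV lam) // #S < lam}, ∃ b : VV lam, ∀ v ∈ S.1, v < b :=
    fun S => VV_bounded hreg S.1 S.2
  choose b hbs using hb
  set Φ : {S : Set (VV lam) // #S < lam} → Σ w : VV lam, Set {v : VV lam // v < w} :=
    fun S => ⟨b S, {v | v.1 ∈ S.1}⟩ with hΦ
  have hinj : Function.Injective Φ := by
    have hext : ∀ S, {v : VV lam | ∃ h : v < (Φ S).1, (⟨v, h⟩ : {v : VV lam // v < (Φ S).1}) ∈ (Φ S).2} = S.1 := by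
      intro S
      ext v
      constructor
      · rintro ⟨h, hv⟩; exact hv
      · intro hv; exact ⟨hbs S v hv, hv⟩
    intro S₁ S₂ h12
    apply Subtype.ext
    rw [← hext S₁, ← hext S₂, h12]
  have hcard : #(Σ w : VV lam, Set {v : VV lam // v < w}) ≤ lam := by
    rw [mk_sigma]
    have hle : ∀ w : VV lam, #(Set {v : VV lam // v < w}) ≤ lam := by
      intro w
      rw [mk_set]
      calc (2 : Cardinal) ^ #{v : VV lam // v < w}
          ≤ lam ^ #{v : VV lam // v < w} := by
            apply power_le_power_right
            exact le_trans (le_of_lt (nat_lt_aleph0 2)) hinf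
        _ ≤ lam ^< lam := by
            apply le_powerlt
            have : #{v : VV lam // v < w} = #{v : VV lam | v < w} := rfl
            rw [this]
            exact mk_Iio_VV w
        _ = lam := hpow
    calc Cardinal.sum (fun w : VV lam => #(Set {v : VV lam // v < w}))
        ≤ Cardinal.sum (fun _ : VV lam => lam) := Cardinal.sum_le_sum _ _ hle
      _ = #(VV lam) * lam := sum_const' _ _
      _ = lam * lam := by rw [mk_VV]
      _ = lam := mul_eq_self hinf
  exact le_trans (mk_le_of_injective hinj) hcard

lemma mk_small_subsets {X : Type} (hX : #X ≤ lam) :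
    #{S : Set X // #S < lam} ≤ lam := by
  classical
  have : #X ≤ #(VV lam) := by rwa [mk_VV]
  obtain ⟨e⟩ := Cardinal.le_def _ _ |>.mp this
  set Ψ : {S : Set X // #S < lam} → {S : Set (VV lam) // #S < lam} :=
    fun S => ⟨e '' S.1, by rw [mk_image_eq e.injective]; exact S.2⟩ with hΨ
  have hinj : Function.Injective Ψ := by
    intro S₁ S₂ h12
    apply Subtype.ext
    have := congrArg Subtype.val h12
    exact Set.image_injective.mpr e.injective this
  exact le_trans (mk_le_of_injective hinj) (mk_small_subsets_VV hinf hreg hpow)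

end count

/-! ### The coherent sequence construction -/

/-- difference set below `x` -/
def Dif (f g : KK lam → VV lam) (x : KK lam) : Set (KK lam) := {ξ | ξ < x ∧ f ξ ≠ g ξ}

/-- fiber of `f` over `v`, below `x` -/
def Fib (f : KK lam → VV lam) (x : KK lam) (v : VV lam) : Set (KK lam) := {ξ | ξ < x ∧ f ξ = v}

section key
variable (hinf : ℵ₀ ≤ lam) (hreg : lam.IsRegular)
include hinf hreg

lemma mk_Iic_VV (j : VV lam) : #{v : VV lam | v ≤ j} < lam := by
  have h1 : {v : VV lam | v ≤ j} = insert j {v : VV lam | v < j} := by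
    ext v; simp [le_iff_lt_or_eq, or_comm]
  rw [h1]
  exact small_insert hinf _ j (mk_Iio_VV j)

omit hreg in
lemma target_large (j : VV lam) : lam ≤ #{v : VV lam | j ≤ v} := by
  have hInf : Infinite (VV lam) := by
    rw [Cardinal.infinite_iff, mk_VV]; exact hinf
  have h1 : {v : VV lam | j ≤ v} = ({v : VV lam | v < j} : Set (VV lam))ᶜ := by
    ext v; simp [not_lt]
  rw [h1, mk_compl_of_infinite _ (by rw [mk_VV]; exact mk_Iio_VV j), mk_VV]

/-- The key construction lemma: one further step of the coherent sequence. -/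
lemma key (β : KK lam) (g : KK lam → KK lam → VV lam)
    (hcoh : ∀ α', α' < β → ∀ α, α < α' → #(Dif (g α') (g α) α) < lam)
    (hfib : ∀ α', α' < β → ∀ v, #(Fib (g α') α' v) < lam) :
    ∃ f : KK lam → VV lam,
      (∀ α, α < β → #(Dif f (g α) α) < lam) ∧ (∀ v, #(Fib f β v) < lam) := by
  classical
  have v0 : VV lam := (nonempty_VV hinf).some
  by_cases h1 : ∃ α : KK lam, α < β
  swap
  · -- base case: no elements below β
    push_neg at h1
    refine ⟨fun _ => v0, fun α hα => absurd hα (not_lt.mpr (h1 α)), fun v => ?_⟩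
    have : Fib (fun _ => v0) β v = ∅ := by
      ext ξ; simp only [Fib, mem_setOf_eq, mem_empty_iff_false, iff_false, not_and]
      intro hξ; exact absurd hξ (not_lt.mpr (h1 ξ))
    rw [this, mk_emptyCollection]
    exact lam_pos hinf
  by_cases h2 : ∃ m : KK lam, m < β ∧ ∀ γ, γ < β → γ ≤ m
  · -- successor case
    obtain ⟨m, hm, hmax⟩ := h2
    refine ⟨g m, fun α hα => ?_, fun v => ?_⟩
    · rcases eq_or_lt_of_le (hmax α hα) with rfl | hlt
      · have : Dif (g α) (g α) α = ∅ := by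
          ext ξ; simp [Dif]
        rw [this, mk_emptyCollection]; exact lam_pos hinf
      · exact hcoh m hm α hlt
    · have hsub : Fib (g m) β v ⊆ insert m (Fib (g m) m v) := by
        intro ξ ⟨hξ, he⟩
        rcases eq_or_lt_of_le (hmax ξ hξ) with rfl | hlt
        · exact mem_insert _ _
        · exact mem_insert_of_mem _ ⟨hlt, he⟩
      exact lt_of_le_of_lt (mk_le_mk_of_subset hsub) (small_insert hinf _ m (hfib m hm v))
  · -- limit case
    push_neg at h2
    obtain ⟨α₁, hα₁⟩ := h1
    have hb_lim : Order.IsSuccLimit (tp β) := by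
      rcases zero_or_succ_or_isSuccLimit (tp β) with hz | ⟨c, hc⟩ | hl
      · exfalso
        have := tp_lt_tp.mpr hα₁
        exact absurd this (by rw [hz]; exact not_lt_zero)
      · exfalso
        have hcb : c < oty (KK lam) := lt_trans (by rw [← hc]; exact Order.lt_succ c) (tp_lt_oty β)
        obtain ⟨m, hm⟩ := h2 (en c hcb) (by rw [en_lt_iff, ← hc]; exact Order.lt_succ c)
        have h3 : tp m < tp β := tp_lt_tp.mpr hm.1
        rw [← hc, Order.lt_succ_iff] at h3
        have h4 : m ≤ en c hcb := by
          have : tp m ≤ tp (en c hcb) := by rwa [tp_en]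
          exact tp_le_tp.mp this
        exact absurd h4 (not_le.mpr hm.2)
      · exact hl
    obtain ⟨fs, hfs⟩ := exists_fundamental_sequence (tp β)
    have ho_le : (tp β).cof.ord ≤ lam.ord :=
      ord_le_ord.mpr (le_trans (cof_le_card (tp β)) (card_tpK_le β))
    have ho_lim : Order.IsSuccLimit (tp β).cof.ord := isSuccLimit_ord (aleph0_le_cof.mpr hb_lim)
    have hfs_lt : ∀ i (hi : i < (tp β).cof.ord), fs i hi < tp β := by
      intro i hi
      have := lt_blsub fs i hi
      rwa [hfs.blsub_eq] at this
    -- the ladder, indexed by `VV`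
    set dd : VV lam → KK lam := fun j =>
      if h : tp j < (tp β).cof.ord then en (fs (tp j) h) (lt_trans (hfs_lt _ h) (tp_lt_oty β))
      else β with hdd
    have dd_lt : ∀ j : VV lam, tp j < (tp β).cof.ord → dd j < β := by
      intro j h
      rw [hdd]; simp only [h, dif_pos]
      rw [en_lt_iff]; exact hfs_lt _ h
    have dd_cof : ∀ ξ : KK lam, ξ < β → ∃ j : VV lam, tp j < (tp β).cof.ord ∧ ξ < dd j := by
      intro ξ hξ
      have h3 : tp ξ < tp β := tp_lt_tp.mpr hξ
      rw [← hfs.blsub_eq] at h3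
      obtain ⟨i, hi, hile⟩ := lt_blsub_iff.mp h3
      have hsi : Order.succ i < (tp β).cof.ord := ho_lim.succ_lt hi
      have hsio : Order.succ i < oty (VV lam) := by
        rw [oty_VV]; exact lt_of_lt_of_le hsi ho_le
      refine ⟨en _ hsio, by rw [tp_en]; exact hsi, ?_⟩
      have h5 : fs i hi < fs (Order.succ i) hsi := hfs.2.1 _ _ (Order.lt_succ i)
      rw [hdd]
      simp only [tp_en, hsi, dif_pos]
      rw [lt_en_iff]
      exact lt_of_le_of_lt hile h5
    -- least segment index
    set P : {ξ : KK lam // ξ < β} → Set (VV lam) :=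
      fun ξ => {j | tp j < (tp β).cof.ord ∧ ξ.1 < dd j} with hP
    have hPne : ∀ ξ, (P ξ).Nonempty := by
      rintro ⟨ξ, hξ⟩
      obtain ⟨j, h3, h4⟩ := dd_cof ξ hξ
      exact ⟨j, h3, h4⟩
    set wfV : WellFounded ((· < ·) : VV lam → VV lam → Prop) := wellFounded_lt
    set jj : {ξ : KK lam // ξ < β} → VV lam := fun ξ => wfV.min (P ξ) (hPne ξ) with hjj
    have jj_spec : ∀ ξ, tp (jj ξ) < (tp β).cof.ord ∧ ξ.1 < dd (jj ξ) :=
      fun ξ => wfV.min_mem (P ξ) (hPne ξ)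
    have jj_le : ∀ ξ (j : VV lam), tp j < (tp β).cof.ord → ξ.1 < dd j → jj ξ ≤ j := by
      intro ξ j h3 h4
      exact not_lt.mp (wfV.not_lt_min (P ξ) (show j ∈ P ξ from ⟨h3, h4⟩))
    -- bad sets and redirection
    set BadSeg : VV lam → Set (KK lam) := fun j =>
      {ξ | ∃ h : ξ < β, jj ⟨ξ, h⟩ = j ∧ tp (g (dd j) ξ) < tp j} with hBadSeg
    have bad_small : ∀ j : VV lam, #(BadSeg j) < lam := by
      intro j
      by_cases hj : tp j < (tp β).cof.ord
      · have hsub : BadSeg j ⊆ ⋃ v : {v : VV lam // v < j}, Fib (g (dd j)) (dd j) v.1 := by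
          rintro ξ ⟨h, hjeq, hlt⟩
          have hξdd : ξ < dd j := by
            have := (jj_spec ⟨ξ, h⟩).2
            rwa [hjeq] at this
          refine mem_iUnion.mpr ⟨⟨g (dd j) ξ, tp_lt_tp.mp hlt⟩, hξdd, rfl⟩
        refine lt_of_le_of_lt (mk_le_mk_of_subset hsub) (small_iUnion hreg _ ?_ ?_)
        · exact mk_Iio_VV j
        · intro v; exact hfib (dd j) (dd_lt j hj) v.1
      · have : BadSeg j = ∅ := by
          ext ξ
          simp only [hBadSeg, mem_setOf_eq, mem_empty_iff_false, iff_false]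
          rintro ⟨h, hjeq, -⟩
          exact hj (hjeq ▸ (jj_spec ⟨ξ, h⟩).1)
        rw [this, mk_emptyCollection]
        exact lam_pos hinf
    have hemb : ∀ j : VV lam, Nonempty (↥(BadSeg j) ↪ ↥{v : VV lam | j ≤ v}) := by
      intro j
      exact Cardinal.le_def _ _ |>.mp (le_trans (bad_small j).le (target_large hinf j))
    set emb : ∀ j : VV lam, ↥(BadSeg j) ↪ ↥{v : VV lam | j ≤ v} :=
      fun j => (hemb j).some with hemb_def
    -- the new function
    set f : KK lam → VV lam := fun ξ =>
      if h : ξ < β then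
        if hb2 : ξ ∈ BadSeg (jj ⟨ξ, h⟩) then (emb (jj ⟨ξ, h⟩) ⟨ξ, hb2⟩).1
        else g (dd (jj ⟨ξ, h⟩)) ξ
      else v0 with hf
    refine ⟨f, ?_, ?_⟩
    · -- coherence
      intro α hα
      set jα := jj ⟨α, hα⟩ with hjα
      set DD : VV lam → Set (KK lam) := fun j =>
        {ξ | ξ < dd j ∧ ξ < α ∧ g (dd j) ξ ≠ g α ξ} with hDD
      have hsub : Dif f (g α) α ⊆
          ⋃ j : {j : VV lam // j ≤ jα}, (BadSeg j.1 ∪ DD j.1) := by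
        rintro ξ ⟨hξα, hne⟩
        have hξβ : ξ < β := lt_trans hξα hα
        set j := jj ⟨ξ, hξβ⟩ with hj
        have hjle : j ≤ jα := by
          apply jj_le ⟨ξ, hξβ⟩ jα (jj_spec ⟨α, hα⟩).1
          exact lt_trans hξα (jj_spec ⟨α, hα⟩).2
        refine mem_iUnion.mpr ⟨⟨j, hjle⟩, ?_⟩
        by_cases hb2 : ξ ∈ BadSeg j
        · exact mem_union_left _ hb2
        · right
          refine ⟨(jj_spec ⟨ξ, hξβ⟩).2, hξα, ?_⟩
          have : f ξ = g (dd j) ξ := by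
            rw [hf]; simp only [hξβ, dif_pos]
            rw [dif_neg]
            exact hb2
          rwa [this] at hne
      refine lt_of_le_of_lt (mk_le_mk_of_subset hsub) (small_iUnion hreg _ ?_ ?_)
      · exact mk_Iic_VV hinf hreg jα
      · rintro ⟨j, hjle⟩
        have hjo : tp j < (tp β).cof.ord :=
          lt_of_le_of_lt (tp_le_tp.mpr hjle) (jj_spec ⟨α, hα⟩).1
        apply lt_of_le_of_lt (mk_union_le _ _)
        apply small_add hinf (bad_small j)
        -- DD j is small
        rcases lt_trichotomy (dd j) α with hlt | heq | hgt
        · refine lt_of_le_of_lt (mk_le_mk_of_subset ?_) (hcoh α hα (dd j) hlt)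
          rintro ξ ⟨h3, h4, h5⟩
          exact ⟨h3, Ne.symm h5⟩
        · have : DD j = ∅ := by
            ext ξ
            simp only [hDD, mem_setOf_eq, mem_empty_iff_false, iff_false, not_and]
            intro h3 h4
            rw [heq]
            simp
          rw [this, mk_emptyCollection]
          exact lam_pos hinf
        · refine lt_of_le_of_lt (mk_le_mk_of_subset ?_) (hcoh (dd j) (dd_lt j hjo) α hgt)
          rintro ξ ⟨h3, h4, h5⟩
          exact ⟨h4, h5⟩
    · -- fibers
      intro w
      have hsub : Fib f β w ⊆
          ⋃ j : {j : VV lam // j ≤ w ∧ tp j < (tp β).cof.ord},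
            (BadSeg j.1 ∪ Fib (g (dd j.1)) (dd j.1) w) := by
        rintro ξ ⟨hξβ, hfe⟩
        set j := jj ⟨ξ, hξβ⟩ with hj
        by_cases hb2 : ξ ∈ BadSeg j
        · have hval : f ξ = (emb j ⟨ξ, hb2⟩).1 := by
            rw [hf]; simp only [hξβ, dif_pos]
            rw [dif_pos hb2]
          have hjw : j ≤ w := by
            have h9 : j ≤ ((emb j ⟨ξ, hb2⟩ : ↥{v : VV lam | j ≤ v}) : VV lam) :=
              (emb j ⟨ξ, hb2⟩).2
            rw [hval] at hfe
            rwa [hfe] at h9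
          exact mem_iUnion.mpr ⟨⟨j, hjw, (jj_spec ⟨ξ, hξβ⟩).1⟩, mem_union_left _ hb2⟩
        · have hval : f ξ = g (dd j) ξ := by
            rw [hf]; simp only [hξβ, dif_pos]
            rw [dif_neg hb2]
          have hjw : j ≤ w := by
            have hnb : ¬ tp (g (dd j) ξ) < tp j := by
              intro hcon
              exact hb2 ⟨hξβ, rfl, hcon⟩
            rw [hval] at hfe
            rw [hfe] at hnb
            exact tp_le_tp.mp (not_lt.mp hnb)
          refine mem_iUnion.mpr ⟨⟨j, hjw, (jj_spec ⟨ξ, hξβ⟩).1⟩, mem_union_right _ ?_⟩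
          exact ⟨(jj_spec ⟨ξ, hξβ⟩).2, by rw [← hval]; exact hfe⟩
      refine lt_of_le_of_lt (mk_le_mk_of_subset hsub) (small_iUnion hreg _ ?_ ?_)
      · refine lt_of_le_of_lt (mk_le_mk_of_subset ?_) (mk_Iic_VV hinf hreg w)
        · exact fun j hj => hj.1
      · rintro ⟨j, hjw, hjo⟩
        apply lt_of_le_of_lt (mk_union_le _ _)
        exact small_add hinf (bad_small j) (hfib (dd j) (dd_lt j hjo) w)

end key

/-! ### The recursion -/

attribute [local instance] Classical.propDecidable

/-- the coherent sequence of functions, by transfinite recursion -/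
def FF (hinf : ℵ₀ ≤ lam) : KK lam → KK lam → VV lam :=
  (wellFounded_lt (α := KK lam)).fix fun β IH =>
    if h : ∃ f : KK lam → VV lam,
        (∀ α (hα : α < β), #(Dif f (IH α hα) α) < lam) ∧ (∀ v, #(Fib f β v) < lam)
    then h.choose else fun _ => (nonempty_VV hinf).some

lemma FF_unfold (hinf : ℵ₀ ≤ lam) (β : KK lam) :
    FF hinf β = if h : ∃ f : KK lam → VV lam,
        (∀ α (_ : α < β), #(Dif f (FF hinf α) α) < lam) ∧ (∀ v, #(Fib f β v) < lam)
      then h.choose else fun _ => (nonempty_VV hinf).some := by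
  rw [FF, WellFounded.fix_eq]

theorem FF_good (hinf : ℵ₀ ≤ lam) (hreg : lam.IsRegular) : ∀ β : KK lam,
    (∀ α, α < β → #(Dif (FF hinf β) (FF hinf α) α) < lam) ∧
      (∀ v, #(Fib (FF hinf β) β v) < lam) := by
  intro β
  refine (wellFounded_lt (α := KK lam)).induction
    (C := fun β => (∀ α, α < β → #(Dif (FF hinf β) (FF hinf α) α) < lam) ∧
      (∀ v, #(Fib (FF hinf β) β v) < lam)) β ?_
  intro β IH
  have hex : ∃ f : KK lam → VV lam,
      (∀ α (_ : α < β), #(Dif f (FF hinf α) α) < lam) ∧ (∀ v, #(Fib f β v) < lam) := by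
    obtain ⟨f, h1, h2⟩ := key hinf hreg β (FF hinf)
      (fun α' hα' α hα => (IH α' hα').1 α hα) (fun α' hα' v => (IH α' hα').2 v)
    exact ⟨f, fun α hα => h1 α hα, h2⟩
  rw [FF_unfold hinf β, dif_pos hex]
  exact ⟨fun α hα => hex.choose_spec.1 α hα, hex.choose_spec.2⟩

/-! ### Order types of subsets -/

section otp
variable {α : Type} [LinearOrder α] [WellFoundedLT α]

lemma oty_mono {S T : Set α} (hsub : S ⊆ T) : oty ↥S ≤ oty ↥T := by
  rw [oty, oty, @type_le_iff' _ _ _ _ isWellOrder_lt isWellOrder_lt]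
  refine ⟨⟨⟨fun x => ⟨x.1, hsub x.2⟩, ?_⟩, Iff.rfl⟩⟩
  intro x y hxy
  simpa [Subtype.ext_iff] using hxy

lemma oty_strict_mono {S T : Set α} (hsub : S ⊆ T) (a : α) (ha : a ∈ T)
    (hlt : ∀ x ∈ S, x < a) : oty ↥S < oty ↥T := by
  have h1 : oty ↥S ≤ oty ↥{x | x ∈ T ∧ x < a} := by
    rw [oty, oty, @type_le_iff' _ _ _ _ isWellOrder_lt isWellOrder_lt]
    refine ⟨⟨⟨fun x => ⟨x.1, hsub x.2, hlt x.1 x.2⟩, ?_⟩, Iff.rfl⟩⟩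
    intro x y hxy
    simpa [Subtype.ext_iff] using hxy
  refine lt_of_le_of_lt h1 ?_
  have ps : @PrincipalSeg ↥{x | x ∈ T ∧ x < a} ↥T (· < ·) (· < ·) := by
    refine ⟨⟨⟨fun x => ⟨x.1, x.2.1⟩, ?_⟩, Iff.rfl⟩, ⟨a, ha⟩, ?_⟩
    · intro x y hxy
      simpa [Subtype.ext_iff] using hxy
    rintro ⟨b, hb⟩
    constructor
    · rintro ⟨⟨c, hc⟩, hcb⟩
      have : c = b := congrArg Subtype.val hcb
      subst this
      exact hc.2
    · intro hba
      exact ⟨⟨b, hb, hba⟩, rfl⟩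
  exact @PrincipalSeg.ordinal_type_lt _ _ _ _ isWellOrder_lt isWellOrder_lt ps

end otp

/-! ### The tree -/

section tree
variable (hinf : ℵ₀ ≤ lam)

/-- default junk value -/
def v0 (hinf : ℵ₀ ≤ lam) : VV lam := (nonempty_VV hinf).some

/-- the node at level `α` determined by `FF β` -/
def nodeFun (β α : KK lam) : KK lam → VV lam :=
  fun ξ => if ξ ≤ α then FF hinf β ξ else v0 hinf

/-- the tree -/
def Tr : Type :=
  {p : KK lam × (KK lam → VV lam) // ∃ β : KK lam, p.1 < β ∧ p.2 = nodeFun hinf β p.1}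

/-- tree order: strict end-extension -/
def rr (s t : Tr hinf) : Prop :=
  s.1.1 < t.1.1 ∧ ∀ ξ, ξ ≤ s.1.1 → s.1.2 ξ = t.1.2 ξ

/-- height function -/
def ht (t : Tr hinf) : Ordinal := tp t.1.1

variable {hinf}

lemma node_val (t : Tr hinf) {ξ : KK lam} (hξ : ξ ≤ t.1.1) :
    t.1.2 ξ = FF hinf t.2.choose ξ := by
  have h2 := t.2.choose_spec.2
  conv_lhs => rw [h2]
  rw [nodeFun, if_pos hξ]

lemma node_val_junk (t : Tr hinf) {ξ : KK lam} (hξ : ¬ ξ ≤ t.1.1) :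
    t.1.2 ξ = v0 hinf := by
  have h2 := t.2.choose_spec.2
  conv_lhs => rw [h2]
  rw [nodeFun, if_neg hξ]

lemma node_lt (t : Tr hinf) : t.1.1 < t.2.choose := t.2.choose_spec.1

lemma node_ext {s t : Tr hinf} (h1 : s.1.1 = t.1.1)
    (h2 : ∀ ξ, ξ ≤ s.1.1 → s.1.2 ξ = t.1.2 ξ) : s = t := by
  apply Subtype.ext
  apply Prod.ext h1
  funext ξ
  by_cases hξ : ξ ≤ s.1.1
  · exact h2 ξ hξ
  · rw [node_val_junk s hξ, node_val_junk t (by rwa [← h1])]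

lemma rr_irrefl (t : Tr hinf) : ¬ rr hinf t t := fun h => lt_irrefl _ h.1

lemma rr_trans {s t u : Tr hinf} (h1 : rr hinf s t) (h2 : rr hinf t u) : rr hinf s u :=
  ⟨lt_trans h1.1 h2.1, fun ξ hξ => (h1.2 ξ hξ).trans (h2.2 ξ (le_trans hξ h1.1.le))⟩

lemma rr_ht_lt {s t : Tr hinf} (h : rr hinf s t) : ht hinf s < ht hinf t :=
  tp_lt_tp.mpr h.1

lemma rr_tricho {s t u : Tr hinf} (h1 : rr hinf s u) (h2 : rr hinf t u) :
    s = t ∨ rr hinf s t ∨ rr hinf t s := by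
  rcases lt_trichotomy s.1.1 t.1.1 with hlt | heq | hgt
  · refine Or.inr (Or.inl ⟨hlt, fun ξ hξ => ?_⟩)
    rw [h1.2 ξ hξ, h2.2 ξ (le_trans hξ hlt.le)]
  · refine Or.inl (node_ext heq fun ξ hξ => ?_)
    rw [h1.2 ξ hξ, h2.2 ξ (by rw [← heq]; exact hξ)]
  · refine Or.inr (Or.inr ⟨hgt, fun ξ hξ => ?_⟩)
    rw [h2.2 ξ hξ, h1.2 ξ (le_trans hξ hgt.le)]

/-- predecessors realize every smaller height -/
lemma rr_pred (t : Tr hinf) (b : Ordinal) (hb : b < ht hinf t) :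
    ∃ s : Tr hinf, rr hinf s t ∧ ht hinf s = b := by
  have hb2 : b < oty (KK lam) := lt_trans hb (tp_lt_oty t.1.1)
  set γ := en b hb2 with hγ
  have hγlt : γ < t.1.1 := by rw [hγ, en_lt_iff]; exact hb
  refine ⟨⟨(γ, nodeFun hinf t.2.choose γ), t.2.choose,
    lt_trans hγlt (node_lt t), rfl⟩, ⟨hγlt, ?_⟩, by
      show tp γ = b
      rw [hγ, tp_en]⟩
  intro ξ hξ
  show nodeFun hinf t.2.choose γ ξ = t.1.2 ξ
  rw [nodeFun, if_pos hξ, node_val t (le_trans hξ (le_of_lt hγlt))]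

lemma ht_lt (t : Tr hinf) : ht hinf t < (Order.succ lam).ord := by
  have := tp_lt_oty t.1.1
  rwa [oty_KK] at this

lemma ht_surj (b : Ordinal) (hb : b < (Order.succ lam).ord) : ∃ t : Tr hinf, ht hinf t = b := by
  have hb2 : b < oty (KK lam) := by rwa [oty_KK]
  obtain ⟨β, hβ⟩ := KK_no_max hinf (en b hb2)
  refine ⟨⟨(en b hb2, nodeFun hinf β (en b hb2)), β, hβ, rfl⟩, ?_⟩
  show tp (en b hb2) = b
  rw [tp_en]

theorem level_small (hreg : lam.IsRegular) (hpow : lam ^< lam = lam) (b : Ordinal) :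
    #{t : Tr hinf // ht hinf t = b} ≤ lam := by
  classical
  by_cases hb : b < oty (KK lam)
  swap
  · have he : IsEmpty {t : Tr hinf // ht hinf t = b} := by
      refine ⟨fun t => hb ?_⟩
      rw [← t.2]
      exact tp_lt_oty t.1.1.1
    rw [mk_eq_zero]
    exact zero_le
  · set α := en b hb with hα
    obtain ⟨αs, hαs⟩ := KK_no_max hinf α
    have hlev : ∀ t : {t : Tr hinf // ht hinf t = b}, t.1.1.1 = α := by
      intro t
      apply tp_inj.mp
      rw [hα, tp_en]
      exact t.2
    set D : {t : Tr hinf // ht hinf t = b} → Set (KK lam) :=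
      fun t => {ξ | ξ ≤ α ∧ t.1.1.2 ξ ≠ FF hinf αs ξ} with hD
    have smallD : ∀ t, #(D t) < lam := by
      intro t
      set βt := t.1.2.choose with hβt
      have hβt1 : α < βt := by rw [← hlev t]; exact node_lt t.1
      have hval : ∀ ξ, ξ ≤ α → t.1.1.2 ξ = FF hinf βt ξ := by
        intro ξ hξ
        exact node_val t.1 (by rw [hlev t]; exact hξ)
      rcases lt_trichotomy βt αs with hlt | heq | hgt
      · refine lt_of_le_of_lt (mk_le_mk_of_subset ?_)
          ((FF_good hinf hreg αs).1 βt hlt)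
        rintro ξ ⟨h1, h2⟩
        refine ⟨lt_of_le_of_lt h1 hβt1, ?_⟩
        rw [← hval ξ h1]
        exact fun hc => h2 hc.symm
      · have : D t = ∅ := by
          ext ξ
          simp only [hD, mem_setOf_eq, mem_empty_iff_false, iff_false, not_and]
          intro h1 h2
          rw [hval ξ h1, heq] at h2
          exact h2 rfl
        rw [this, mk_emptyCollection]
        exact lam_pos hinf
      · refine lt_of_le_of_lt (mk_le_mk_of_subset ?_)
          ((FF_good hinf hreg βt).1 αs hgt)
        rintro ξ ⟨h1, h2⟩
        refine ⟨lt_of_le_of_lt h1 hαs, ?_⟩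
        rw [← hval ξ h1]
        exact h2
    set X := {ξ : KK lam // ξ ≤ α} × VV lam with hX
    set Φ : {t : Tr hinf // ht hinf t = b} → Set X :=
      fun t => {p | p.1.1 ∈ D t ∧ p.2 = t.1.1.2 p.1.1} with hΦ
    have smallΦ : ∀ t, #(Φ t) < lam := by
      intro t
      refine lt_of_le_of_lt (@mk_le_of_injective _ _
        (fun p : ↥(Φ t) => (⟨p.1.1.1, p.2.1⟩ : ↥(D t))) ?_) (smallD t)
      rintro ⟨⟨⟨ξ, hξ⟩, v⟩, hv⟩ ⟨⟨⟨ξ', hξ'⟩, v'⟩, hv'⟩ h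
      have h1 : ξ = ξ' := congrArg Subtype.val h
      subst h1
      have h2 : v = v' := hv.2.trans hv'.2.symm
      subst h2
      rfl
    have hinj : Function.Injective (fun t => (⟨Φ t, smallΦ t⟩ : {S : Set X // #S < lam})) := by
      intro t t' h
      have hΦeq : Φ t = Φ t' := congrArg Subtype.val h
      apply Subtype.ext
      apply node_ext (by rw [hlev t, hlev t'])
      intro ξ hξ2
      have hξ : ξ ≤ α := by rw [← hlev t]; exact hξ2
      by_cases h1 : t.1.1.2 ξ = FF hinf αs ξ <;> by_cases h2 : t'.1.1.2 ξ = FF hinf αs ξ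
      · rw [h1, h2]
      · exfalso
        have hmem : ((⟨ξ, hξ⟩, t'.1.1.2 ξ) : X) ∈ Φ t' := ⟨⟨hξ, h2⟩, rfl⟩
        rw [← hΦeq] at hmem
        exact hmem.1.2 h1
      · exfalso
        have hmem : ((⟨ξ, hξ⟩, t.1.1.2 ξ) : X) ∈ Φ t := ⟨⟨hξ, h1⟩, rfl⟩
        rw [hΦeq] at hmem
        exact hmem.1.2 h2
      · have hmem : ((⟨ξ, hξ⟩, t.1.1.2 ξ) : X) ∈ Φ t := ⟨⟨hξ, h1⟩, rfl⟩
        rw [hΦeq] at hmem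
        exact hmem.2
    refine le_trans (mk_le_of_injective hinj) ?_
    apply mk_small_subsets hinf hreg hpow
    rw [hX]
    have h3 : #({ξ : KK lam // ξ ≤ α} × VV lam) = #{ξ : KK lam // ξ ≤ α} * #(VV lam) := by
      rw [mk_prod, Cardinal.lift_id, Cardinal.lift_id]
    rw [h3, mk_VV]
    calc #{ξ : KK lam // ξ ≤ α} * lam ≤ lam * lam := by
          gcongr
          exact mk_Iic_KK hinf α
      _ = lam := mul_eq_self hinf

lemma KK_bounded (hreg : lam.IsRegular) (S : Set (KK lam)) (hS : #S < Order.succ lam) :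
    ∃ b : KK lam, ∀ x ∈ S, x < b := by
  have hsreg : (Order.succ lam).IsRegular := isRegular_succ hreg.aleph0_le
  have h1 : ∀ v : S, Order.succ (tp v.1) < (Order.succ lam).ord := by
    intro v
    have := tp_lt_oty v.1
    rw [oty_KK] at this
    exact (isSuccLimit_ord hsreg.aleph0_le).succ_lt this
  have h2 : (⨆ v : S, Order.succ (tp v.1)) < (Order.succ lam).ord :=
    iSup_lt_ord_of_isRegular hsreg hS h1
  have h3 : (⨆ v : S, Order.succ (tp v.1)) < oty (KK lam) := by rwa [oty_KK]
  refine ⟨en _ h3, fun v hv => ?_⟩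
  rw [lt_en_iff]
  exact lt_of_lt_of_le (Order.lt_succ (tp v)) (le_ciSup (Ordinal.bddAbove_range _) (⟨v, hv⟩ : S))

theorem no_branch (hreg : lam.IsRegular) :
    ¬ ∃ C : Set (Tr hinf), (∀ s ∈ C, ∀ t ∈ C, s = t ∨ rr hinf s t ∨ rr hinf t s) ∧
      Order.succ lam ≤ #C := by
  classical
  rintro ⟨C, hchain, hsize⟩
  have hlevinj : ∀ s ∈ C, ∀ t ∈ C, s.1.1 = t.1.1 → s = t := by
    intro s hs t ht h
    rcases hchain s hs t ht with h1 | h1 | h1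
    · exact h1
    · exact absurd h1.1 (by rw [h]; exact lt_irrefl _)
    · exact absurd h1.1 (by rw [h]; exact lt_irrefl _)
  have hcons : ∀ s ∈ C, ∀ t ∈ C, ∀ ξ, ξ ≤ s.1.1 → ξ ≤ t.1.1 → s.1.2 ξ = t.1.2 ξ := by
    intro s hs t ht ξ hξs hξt
    rcases hchain s hs t ht with h1 | h1 | h1
    · rw [h1]
    · exact h1.2 ξ hξs
    · exact (h1.2 ξ hξt).symm
  have hunb : ∀ x : KK lam, ∃ t, t ∈ C ∧ x < t.1.1 := by
    intro x
    by_contra hx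
    push_neg at hx
    have hle : #C ≤ #{ξ : KK lam | ξ ≤ x} := by
      refine mk_le_of_injective (f := fun t : ↥C =>
        (⟨t.1.1.1, hx t.1 t.2⟩ : {ξ : KK lam | ξ ≤ x})) ?_
      intro t t' h
      exact Subtype.ext (hlevinj _ t.2 _ t'.2 (congrArg Subtype.val h))
    exact (Order.lt_succ lam).not_ge (le_trans hsize (le_trans hle (mk_Iic_KK hinf x)))
  choose tf htfC htflt using hunb
  set G : KK lam → VV lam := fun ξ => (tf ξ).1.2 ξ with hG
  have hGval : ∀ (ξ : KK lam) (t : Tr hinf), t ∈ C → ξ ≤ t.1.1 → G ξ = t.1.2 ξ :=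
    fun ξ t htC hξ => hcons _ (htfC ξ) _ htC ξ (le_of_lt (htflt ξ)) hξ
  have hfib : ∀ v : VV lam, #{ξ : KK lam | G ξ = v} ≤ lam := by
    intro v
    by_contra hv
    push_neg at hv
    obtain ⟨W, hWsub, hWcard⟩ := le_mk_iff_exists_subset.mp hv.le
    obtain ⟨x, hx⟩ := KK_bounded hreg W (by rw [hWcard]; exact Order.lt_succ lam)
    set t := tf x with ht
    have hsub : W ⊆ Fib (FF hinf t.2.choose) t.2.choose v := by
      intro ξ hξW
      have h1 : ξ < t.1.1 := lt_trans (hx ξ hξW) (htflt x)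
      refine ⟨lt_trans h1 (node_lt t), ?_⟩
      have h2 : G ξ = v := hWsub hξW
      rw [hGval ξ t (htfC x) h1.le] at h2
      rw [← node_val t h1.le]
      exact h2
    have h3 : lam ≤ #(Fib (FF hinf t.2.choose) t.2.choose v) :=
      le_trans (le_of_eq hWcard.symm) (mk_le_mk_of_subset hsub)
    exact absurd h3 (not_le.mpr ((FF_good hinf hreg t.2.choose).2 v))
  have hcover : (univ : Set (KK lam)) = ⋃ v : VV lam, {ξ : KK lam | G ξ = v} := by
    ext ξ
    simp only [mem_univ, true_iff, mem_iUnion, mem_setOf_eq]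
    exact ⟨G ξ, rfl⟩
  have hfin : #(KK lam) ≤ lam := by
    calc #(KK lam) = #(univ : Set (KK lam)) := mk_univ.symm
      _ ≤ Cardinal.sum (fun v : VV lam => #{ξ : KK lam | G ξ = v}) := by
          rw [hcover]; exact mk_iUnion_le_sum_mk
      _ ≤ Cardinal.sum (fun _ : VV lam => lam) := Cardinal.sum_le_sum _ _ hfib
      _ = #(VV lam) * lam := sum_const' _ _
      _ = lam * lam := by rw [mk_VV]
      _ = lam := mul_eq_self hinf
  rw [mk_KK] at hfin
  exact (Order.lt_succ lam).not_ge hfin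

/-- occurrence set of the top value -/
def occ (t : Tr hinf) : Set (KK lam) := {ξ | ξ ≤ t.1.1 ∧ t.1.2 ξ = t.1.2 t.1.1}

lemma occ_small (hreg : lam.IsRegular) (t : Tr hinf) : #(occ t) < lam := by
  refine lt_of_le_of_lt (mk_le_mk_of_subset (t := Fib (FF hinf t.2.choose) t.2.choose
    (t.1.2 t.1.1)) ?_) ((FF_good hinf hreg t.2.choose).2 _)
  rintro ξ ⟨h1, h2⟩
  exact ⟨lt_of_le_of_lt h1 (node_lt t), by rw [← node_val t h1]; exact h2⟩

lemma occ_oty_lt (hreg : lam.IsRegular) (t : Tr hinf) : oty ↥(occ t) < oty (VV lam) := by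
  rw [oty_VV, lt_ord, oty_card]
  exact occ_small hreg t

/-- the specializing function -/
def color (hreg : lam.IsRegular) (t : Tr hinf) : VV lam × VV lam :=
  (t.1.2 t.1.1, en (oty ↥(occ t)) (occ_oty_lt hreg t))

theorem color_ne (hreg : lam.IsRegular) {s t : Tr hinf} (h : rr hinf s t) :
    color hreg s ≠ color hreg t := by
  intro heq
  have h1 : s.1.2 s.1.1 = t.1.2 t.1.1 := congrArg Prod.fst heq
  have h2 : oty ↥(occ s) = oty ↥(occ t) := by
    have h3 := congrArg Prod.snd heq
    simp only [color] at h3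
    have h4 := congrArg tp h3
    rwa [tp_en, tp_en] at h4
  have h5 : oty ↥(occ s) < oty ↥(occ t) := by
    refine oty_strict_mono ?_ t.1.1 ⟨le_refl _, rfl⟩ ?_
    · rintro ξ ⟨hξ1, hξ2⟩
      refine ⟨le_trans hξ1 h.1.le, ?_⟩
      rw [← h.2 ξ hξ1, hξ2, h1]
    · rintro ξ ⟨hξ1, _⟩
      exact lt_of_le_of_lt hξ1 h.1
  rw [h2] at h5
  exact lt_irrefl _ h5

end tree

end Specker14

/-- Specker's theorem: if λ is regular with λ^{<λ} = λ, then there exists a special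
λ⁺-Aronszajn tree (given by a type T, a strict tree order r, and its height function h). -/
theorem stmt14 (lam : Cardinal.{0}) (hinf : Cardinal.aleph0 ≤ lam)
    (hreg : lam.IsRegular) (hpow : lam ^< lam = lam) :
    ∃ (T : Type) (r : T → T → Prop) (h : T → Ordinal),
      (∀ t, ¬ r t t) ∧ (∀ s t u, r s t → r t u → r s u) ∧           -- strict order
      (∀ s t, r s t → h s < h t) ∧
      (∀ s t u, r s u → r t u → s = t ∨ r s t ∨ r t s) ∧           -- predecessors form a chain
      (∀ t, ∀ β < h t, ∃ s, r s t ∧ h s = β) ∧                     -- h is the true height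
      (∀ t, h t < (Order.succ lam).ord) ∧                          -- tree of height λ⁺:
      (∀ β < (Order.succ lam).ord, ∃ t, h t = β) ∧                 -- all levels nonempty
      (∀ β : Ordinal, Cardinal.mk {t : T // h t = β} ≤ lam) ∧      -- levels of size ≤ λ
      (¬ ∃ C : Set T, (∀ s ∈ C, ∀ t ∈ C, s = t ∨ r s t ∨ r t s) ∧
        Order.succ lam ≤ Cardinal.mk ↥C) ∧                          -- no branch of length λ⁺
      ∃ (ι : Type) (f : T → ι), Cardinal.mk ι ≤ lam ∧
        ∀ s t, r s t → f s ≠ f t := by                              -- union of λ antichains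
  refine ⟨Specker14.Tr hinf, Specker14.rr hinf, Specker14.ht hinf,
    fun t => Specker14.rr_irrefl t,
    fun s t u h1 h2 => Specker14.rr_trans h1 h2,
    fun s t h => Specker14.rr_ht_lt h,
    fun s t u h1 h2 => Specker14.rr_tricho h1 h2,
    fun t b hb => Specker14.rr_pred t b hb,
    fun t => Specker14.ht_lt t,
    fun b hb => Specker14.ht_surj b hb,
    fun b => Specker14.level_small hreg hpow b,
    Specker14.no_branch hreg,
    Specker14.VV lam × Specker14.VV lam, Specker14.color hreg, ?_,
    fun s t h => Specker14.color_ne hreg h⟩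
  rw [Cardinal.mk_prod, Specker14.mk_VV]
  simp only [Cardinal.lift_id]
  exact le_of_eq (Cardinal.mul_eq_self hinf)
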